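/- Let k, d, n be positive integers with d < n. If 𝒜 is a k-wise (n−d)-union family of subsets of [n], then VC(△𝒜^k) ≤ d. In particular, the maximum size of a family 𝒜 ⊆ 2^[n] with VC(△𝒜^k) ≤ d equals the maximum size of a k-wise (n−d)-union family of subsets of [n]. -/
import Mathlib


/-- A set `Y` is shattered by the family `F` if every subset of `Y`
is the trace of some member of `F` on `Y`. -/
def Shatters {α : Type*} [DecidableEq α] (F : Finset (Finset α)) (Y : Finset α) : Prop :=
  ∀ T ⊆ Y, ∃ S ∈ F, S ∩ Y = T

/-- The VC dimension of a family: the largest cardinality of a shattered set. -/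
noncomputable def vcDim {α : Type*} [DecidableEq α] (F : Finset (Finset α)) : ℕ :=
  sSup {m | ∃ Y : Finset α, Shatters F Y ∧ Y.card = m}

/-- `S₁ △ S₂ △ ⋯ △ S_k` for a `k`-tuple of sets. -/
def symmDiffAll {α : Type*} [DecidableEq α] {k : ℕ} (f : Fin k → Finset α) : Finset α :=
  (List.ofFn f).foldr symmDiff ∅

/-- The `k`-fold symmetric difference family `△𝒜^k`. -/
def symmDiffFam {α : Type*} [DecidableEq α] (k : ℕ) (A : Finset (Finset α)) :
    Finset (Finset α) :=
  (Fintype.piFinset fun _ : Fin k => A).image symmDiffAll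

/-- The family `𝒜₁ △ ⋯ △ 𝒜ₖ`. -/
def symmDiffFamMulti {α : Type*} [DecidableEq α] {k : ℕ} (A : Fin k → Finset (Finset α)) :
    Finset (Finset α) :=
  (Fintype.piFinset A).image symmDiffAll

/-- A family is `k`-wise `(n-d)`-union if any `k` of its members have union of size `≤ d`. -/
def KwiseUnion {α : Type*} [DecidableEq α] (k d : ℕ) (A : Finset (Finset α)) : Prop :=
  ∀ f : Fin k → Finset α, (∀ i, f i ∈ A) → (Finset.univ.sup f).card ≤ d

/-- The `i`-compression of a family. -/
def compress {α : Type*} [DecidableEq α] (i : α) (A : Finset (Finset α)) :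
    Finset (Finset α) :=
  A.image fun S => if S ∈ A ∧ S.erase i ∈ A then S else S.erase i

/-- The `(i,j)`-shift of a family. -/
def shiftIJ {α : Type*} [DecidableEq α] (i j : α) (A : Finset (Finset α)) :
    Finset (Finset α) :=
  A.image fun S => if i ∉ S ∧ j ∈ S ∧ insert i (S.erase j) ∉ A then insert i (S.erase j) else S

/-- `p(n,k,d)`: the maximum size of a `k`-wise `(n-d)`-union family on `[n]`. -/
noncomputable def pMax (n k d : ℕ) : ℕ :=
  sSup {m | ∃ F : Finset (Finset (Fin n)), KwiseUnion k d F ∧ F.card = m}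

/-! ### Auxiliary machinery -/

section Aux
variable {α : Type*} [DecidableEq α]

/-- number of indices `j` with `x ∈ f j` -/
def Ncount {k : ℕ} (f : Fin k → Finset α) (x : α) : ℕ :=
  (Finset.univ.filter fun j => x ∈ f j).card

lemma symmDiffAll_succ {k : ℕ} (f : Fin (k+1) → Finset α) :
    symmDiffAll f = symmDiff (f 0) (symmDiffAll fun j => f j.succ) := by
  simp [symmDiffAll, List.ofFn_succ]

lemma Ncount_succ {k : ℕ} (f : Fin (k+1) → Finset α) (x : α) :
    Ncount f x = (if x ∈ f 0 then 1 else 0) + Ncount (fun j => f j.succ) x := by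
  unfold Ncount
  rw [Finset.card_filter, Finset.card_filter, Fin.sum_univ_succ]

lemma mem_symmDiffAll {k : ℕ} (f : Fin k → Finset α) (x : α) :
    x ∈ symmDiffAll f ↔ Odd (Ncount f x) := by
  induction k with
  | zero => simp [symmDiffAll, Ncount, List.ofFn]
  | succ k ih =>
    rw [symmDiffAll_succ, Finset.mem_symmDiff, Ncount_succ, ih (fun j => f j.succ)]
    by_cases hx : x ∈ f 0 <;> simp [hx, Nat.odd_iff] <;> omega

lemma Ncount_pos_iff {k : ℕ} (f : Fin k → Finset α) (x : α) :
    0 < Ncount f x ↔ ∃ j, x ∈ f j := by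
  simp [Ncount, Finset.card_pos, Finset.filter_nonempty_iff]

lemma symmDiffAll_subset_sup {k : ℕ} (f : Fin k → Finset α) :
    symmDiffAll f ⊆ Finset.univ.sup f := by
  intro x hx
  rw [mem_symmDiffAll] at hx
  have h1 : 0 < Ncount f x := hx.pos
  rw [Ncount_pos_iff] at h1
  obtain ⟨j, hj⟩ := h1
  exact Finset.mem_sup.2 ⟨j, Finset.mem_univ j, hj⟩

lemma mem_symmDiffFam {k : ℕ} {A : Finset (Finset α)} {S : Finset α} :
    S ∈ symmDiffFam k A ↔ ∃ f : Fin k → Finset α, (∀ j, f j ∈ A) ∧ symmDiffAll f = S := by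
  simp [symmDiffFam, Fintype.mem_piFinset]

lemma Shatters.card_le' {F : Finset (Finset α)} {Y : Finset α}
    (h : Shatters F Y) {d : ℕ} (hF : ∀ S ∈ F, S.card ≤ d) : Y.card ≤ d := by
  obtain ⟨S, hS, hSY⟩ := h Y (subset_refl Y)
  have : Y ⊆ S := fun y hy => by
    have h2 : y ∈ S ∩ Y := by rw [hSY]; exact hy
    exact (Finset.mem_inter.1 h2).1
  exact le_trans (Finset.card_le_card this) (hF S hS)

lemma vcDim_le {F : Finset (Finset α)} {d : ℕ}
    (h : ∀ Y : Finset α, Shatters F Y → Y.card ≤ d) : vcDim F ≤ d := by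
  apply csSup_le'
  rintro m ⟨Y, hY, rfl⟩
  exact h Y hY

lemma part1 {k d : ℕ} {A : Finset (Finset α)}
    (hA : KwiseUnion k d A) : vcDim (symmDiffFam k A) ≤ d := by
  apply vcDim_le
  intro Y hY
  apply hY.card_le'
  intro S hS
  obtain ⟨f, hf, rfl⟩ := mem_symmDiffFam.1 hS
  exact le_trans (Finset.card_le_card (symmDiffAll_subset_sup f)) (hA f hf)

lemma compress_injOn (i : α) (A : Finset (Finset α)) :
    Set.InjOn (fun S => if S ∈ A ∧ S.erase i ∈ A then S else S.erase i) A := by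
  intro S hS S' hS' h
  simp only at h
  by_cases h1 : S ∈ A ∧ S.erase i ∈ A <;> by_cases h2 : S' ∈ A ∧ S'.erase i ∈ A
  · rwa [if_pos h1, if_pos h2] at h
  · -- S kept, S' moved: S = S'.erase i
    rw [if_pos h1, if_neg h2] at h
    exact absurd ⟨hS', h ▸ hS⟩ h2
  · rw [if_neg h1, if_pos h2] at h
    exact absurd ⟨hS, h ▸ hS'⟩ h1
  · rw [if_neg h1, if_neg h2] at h
    -- both moved; i ∈ S and i ∈ S', else contradiction
    have hiS : i ∈ S := by
      by_contra hi
      rw [Finset.erase_eq_of_notMem hi] at *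
      exact h1 ⟨hS, hS⟩
    have hiS' : i ∈ S' := by
      by_contra hi
      rw [Finset.erase_eq_of_notMem hi] at *
      exact h2 ⟨hS', hS'⟩
    ext x
    by_cases hx : x = i
    · subst hx; simp [hiS, hiS']
    · constructor <;> intro hmem
      · have : x ∈ S.erase i := Finset.mem_erase.2 ⟨hx, hmem⟩
        rw [h] at this; exact (Finset.mem_erase.1 this).2
      · have : x ∈ S'.erase i := Finset.mem_erase.2 ⟨hx, hmem⟩
        rw [← h] at this; exact (Finset.mem_erase.1 this).2


lemma card_compress (i : α) (A : Finset (Finset α)) : (compress i A).card = A.card :=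
  Finset.card_image_of_injOn (compress_injOn i A)

/-- the total-size measure -/
def msr {α : Type*} [DecidableEq α] (A : Finset (Finset α)) : ℕ := ∑ S ∈ A, S.card

lemma msr_compress_lt (i : α) (A : Finset (Finset α)) (h : compress i A ≠ A) : msr (compress i A) < msr A := by
  unfold msr compress
  rw [Finset.sum_image (compress_injOn i A)]
  have hex : ∃ S ∈ A, ¬ (S ∈ A ∧ S.erase i ∈ A) := by
    by_contra hall
    push_neg at hall
    apply h
    unfold compress
    rw [Finset.image_congr (g := id) (fun S hS => by
      simp only [id]; rw [if_pos (hall S (by simpa using hS))]), Finset.image_id]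
  obtain ⟨S₀, hS₀, hc⟩ := hex
  have hi₀ : i ∈ S₀ := by
    by_contra hi
    exact hc ⟨hS₀, by rwa [Finset.erase_eq_of_notMem hi]⟩
  apply Finset.sum_lt_sum
  · intro S hS
    split
    · exact le_refl _
    · exact Finset.card_le_card (Finset.erase_subset _ _)
  · refine ⟨S₀, hS₀, ?_⟩
    rw [if_neg hc]
    exact Finset.card_erase_lt_of_mem hi₀

lemma erase_mem_of_all_compressed (A : Finset (Finset α)) (h : ∀ j : α, compress j A = A) :
    ∀ S ∈ A, ∀ j : α, S.erase j ∈ A := by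
  intro S hS j
  by_cases hc : S ∈ A ∧ S.erase j ∈ A
  · exact hc.2
  · have : (if S ∈ A ∧ S.erase j ∈ A then S else S.erase j) ∈ compress j A :=
      Finset.mem_image_of_mem _ hS
    rw [if_neg hc, h j] at this
    exact this

lemma downclosed_of_erase_closed (A : Finset (Finset α)) (h : ∀ S ∈ A, ∀ j : α, S.erase j ∈ A) :
    ∀ S ∈ A, ∀ T ⊆ S, T ∈ A := by
  intro S hS T hT
  -- induction on card of S \ T
  have key : ∀ m : ℕ, ∀ S ∈ A, ∀ T ⊆ S, (S \ T).card = m → T ∈ A := by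
    intro m
    induction m with
    | zero =>
      intro S hS T hT hcard
      have hST : S ⊆ T := Finset.sdiff_eq_empty_iff_subset.1 (Finset.card_eq_zero.1 hcard)
      exact (Finset.Subset.antisymm hST hT) ▸ hS
    | succ m ih =>
      intro S hS T hT hcard
      have hne : (S \ T).Nonempty := by rw [← Finset.card_pos, hcard]; omega
      obtain ⟨x, hx⟩ := hne
      obtain ⟨hxS, hxT⟩ := Finset.mem_sdiff.1 hx
      apply ih (S.erase x) (h S hS x)
      · intro y hy
        exact Finset.mem_erase.2 ⟨fun hyx => hxT (hyx ▸ hy), hT hy⟩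
      · have heq : S.erase x \ T = (S \ T).erase x := by
          ext y; simp only [Finset.mem_erase, Finset.mem_sdiff]; tauto
        rw [heq, Finset.card_erase_of_mem hx, hcard]; omega
  exact key (S \ T).card S hS T hT rfl

lemma Ncount_congr {k : ℕ} {f g : Fin k → Finset α} {x : α}
    (h : ∀ j, x ∈ f j ↔ x ∈ g j) : Ncount f x = Ncount g x := by
  unfold Ncount
  congr 1
  exact Finset.filter_congr fun j _ => by simp [h j]

lemma mem_compress_cases {i : α} {A : Finset (Finset α)} {S : Finset α}
    (hS : S ∈ compress i A) : S ∈ A ∨ (i ∉ S ∧ insert i S ∈ A) := by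
  obtain ⟨R, hR, hRS⟩ := Finset.mem_image.1 hS
  by_cases hc : R ∈ A ∧ R.erase i ∈ A
  · rw [if_pos hc] at hRS; exact Or.inl (hRS ▸ hR)
  · rw [if_neg hc] at hRS
    have hiR : i ∈ R := by
      by_contra hi
      exact hc ⟨hR, by rwa [Finset.erase_eq_of_notMem hi]⟩
    right
    subst hRS
    exact ⟨Finset.notMem_erase i R, by rwa [Finset.insert_erase hiR]⟩

lemma mem_compress_of_mem_i {i : α} {A : Finset (Finset α)} {S : Finset α}
    (hS : S ∈ compress i A) (hi : i ∈ S) : S ∈ A ∧ S.erase i ∈ A := by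
  obtain ⟨R, hR, hRS⟩ := Finset.mem_image.1 hS
  by_cases hc : R ∈ A ∧ R.erase i ∈ A
  · rw [if_pos hc] at hRS; exact hRS ▸ hc
  · rw [if_neg hc] at hRS
    exact absurd (hRS ▸ hi) (Finset.notMem_erase i R)

lemma shatters_compress {k : ℕ} {i : α} {A : Finset (Finset α)} {Y : Finset α}
    (hY : Shatters (symmDiffFam k (compress i A)) Y) :
    Shatters (symmDiffFam k A) Y := by
  intro T hTY
  by_cases hiY : i ∈ Y
  · -- hard case: i ∈ Y
    have hT0Y : insert i T ⊆ Y := Finset.insert_subset hiY hTY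
    obtain ⟨S, hSB, hSY⟩ := hY (insert i T) hT0Y
    obtain ⟨f, hfB, hfS⟩ := mem_symmDiffFam.1 hSB
    have hiS : i ∈ S := by
      have : i ∈ S ∩ Y := hSY ▸ Finset.mem_insert_self i T
      exact (Finset.mem_inter.1 this).1
    have hiSf : Odd (Ncount f i) := (mem_symmDiffAll f i).1 (hfS ▸ hiS)
    obtain ⟨j₀, hj₀⟩ := (Ncount_pos_iff f i).1 hiSf.pos
    have hfj₀ : f j₀ ∈ A ∧ (f j₀).erase i ∈ A := mem_compress_of_mem_i (hfB j₀) hj₀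
    -- base choice
    set base : Fin k → Finset α := fun j => if f j ∈ A then f j else insert i (f j) with hbase
    have hbaseA : ∀ j, base j ∈ A := by
      intro j
      rcases mem_compress_cases (hfB j) with h | ⟨h1, h2⟩
      · simp [hbase, h]
      · simp only [hbase]
        split
        · assumption
        · exact h2
    have hbase_agree : ∀ x, x ≠ i → ∀ j, (x ∈ base j ↔ x ∈ f j) := by
      intro x hx j
      simp only [hbase]
      split
      · rfl
      · simp [Finset.mem_insert, hx]
    have hbasej₀ : base j₀ = f j₀ := by simp [hbase, hfj₀.1]
    set f₂ : Fin k → Finset α := Function.update base j₀ ((f j₀).erase i) with hf₂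
    have hf₂A : ∀ j, f₂ j ∈ A := by
      intro j
      by_cases hj : j = j₀
      · subst hj; simp [hf₂, hfj₀.2]
      · simp [hf₂, Function.update_of_ne hj, hbaseA j]
    have hf₂_agree : ∀ x, x ≠ i → ∀ j, (x ∈ f₂ j ↔ x ∈ f j) := by
      intro x hx j
      by_cases hj : j = j₀
      · subst hj
        simp only [hf₂, Function.update_self, Finset.mem_erase]
        constructor
        · exact fun h => h.2
        · exact fun h => ⟨hx, h⟩
      · simp only [hf₂, Function.update_of_ne hj]
        exact hbase_agree x hx j
    -- parity at i
    have hparity : Ncount base i = Ncount f₂ i + 1 := by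
      unfold Ncount
      have hmem : j₀ ∈ Finset.univ.filter fun j => i ∈ base j := by
        simp [hbasej₀, hj₀]
      have : (Finset.univ.filter fun j => i ∈ f₂ j) =
          (Finset.univ.filter fun j => i ∈ base j).erase j₀ := by
        ext j
        by_cases hj : j = j₀
        · subst hj; simp [hf₂]
        · simp [hf₂, Function.update_of_ne hj, hj]
      rw [this, Finset.card_erase_of_mem hmem]
      have : 0 < (Finset.univ.filter fun j => i ∈ base j).card :=
        Finset.card_pos.2 ⟨j₀, hmem⟩
      omega
    -- choose the right candidate
    have hkey : ∃ g : Fin k → Finset α, (∀ j, g j ∈ A) ∧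
        (∀ x, x ≠ i → ∀ j, (x ∈ g j ↔ x ∈ f j)) ∧ (Odd (Ncount g i) ↔ i ∈ T) := by
      by_cases hOdd : Odd (Ncount base i) ↔ i ∈ T
      · exact ⟨base, hbaseA, hbase_agree, hOdd⟩
      · refine ⟨f₂, hf₂A, hf₂_agree, ?_⟩
        rw [Nat.odd_iff] at hOdd ⊢
        rw [hparity] at hOdd
        by_cases hT : i ∈ T <;> simp [hT] at hOdd ⊢ <;> omega
    obtain ⟨g, hgA, hg_agree, hg_parity⟩ := hkey
    refine ⟨symmDiffAll g, mem_symmDiffFam.2 ⟨g, hgA, rfl⟩, ?_⟩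
    ext x
    rw [Finset.mem_inter, mem_symmDiffAll]
    by_cases hx : x = i
    · subst hx
      constructor
      · exact fun h => hg_parity.1 h.1
      · exact fun h => ⟨hg_parity.2 h, hiY⟩
    · have hNc : Ncount g x = Ncount f x := Ncount_congr (hg_agree x hx)
      rw [hNc, ← mem_symmDiffAll, hfS]
      constructor
      · intro ⟨h1, h2⟩
        have : x ∈ S ∩ Y := Finset.mem_inter.2 ⟨h1, h2⟩
        rw [hSY] at this
        rcases Finset.mem_insert.1 this with h | h
        · exact absurd h hx
        · exact h
      · intro h
        have : x ∈ S ∩ Y := hSY ▸ Finset.mem_insert_of_mem h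
        exact Finset.mem_inter.1 this
  · -- easy case: i ∉ Y
    obtain ⟨S, hSB, hSY⟩ := hY T hTY
    obtain ⟨f, hfB, hfS⟩ := mem_symmDiffFam.1 hSB
    set g : Fin k → Finset α := fun j => if f j ∈ A then f j else insert i (f j) with hg
    have hgA : ∀ j, g j ∈ A := by
      intro j
      rcases mem_compress_cases (hfB j) with h | ⟨h1, h2⟩
      · simp [hg, h]
      · simp only [hg]
        split
        · assumption
        · exact h2
    have hg_agree : ∀ x, x ≠ i → ∀ j, (x ∈ g j ↔ x ∈ f j) := by
      intro x hx j
      simp only [hg]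
      split
      · rfl
      · simp [Finset.mem_insert, hx]
    refine ⟨symmDiffAll g, mem_symmDiffFam.2 ⟨g, hgA, rfl⟩, ?_⟩
    ext x
    rw [Finset.mem_inter, mem_symmDiffAll]
    constructor
    · intro ⟨h1, h2⟩
      have hx : x ≠ i := fun h => hiY (h ▸ h2)
      rw [Ncount_congr (hg_agree x hx), ← mem_symmDiffAll, hfS] at h1
      have : x ∈ S ∩ Y := Finset.mem_inter.2 ⟨h1, h2⟩
      rwa [hSY] at this
    · intro h
      have h2 : x ∈ Y := hTY h
      have hx : x ≠ i := fun he => hiY (he ▸ h2)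
      have : x ∈ S ∩ Y := hSY ▸ h
      obtain ⟨h1, _⟩ := Finset.mem_inter.1 this
      rw [← hfS, mem_symmDiffAll] at h1
      rw [Ncount_congr (hg_agree x hx)]
      exact ⟨h1, h2⟩

lemma bddAbove_vcset (F : Finset (Finset α)) :
    BddAbove {m | ∃ Y : Finset α, Shatters F Y ∧ Y.card = m} := by
  refine ⟨F.sup Finset.card, ?_⟩
  rintro m ⟨Y, hY, rfl⟩
  obtain ⟨S, hS, hSY⟩ := hY Y (subset_refl Y)
  have hYS : Y ⊆ S := fun y hy => by
    have h2 : y ∈ S ∩ Y := by rw [hSY]; exact hy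
    exact (Finset.mem_inter.1 h2).1
  exact le_trans (Finset.card_le_card hYS) (Finset.le_sup hS)

lemma shatters_of_downclosed {k : ℕ} {A : Finset (Finset α)}
    (hdc : ∀ S ∈ A, ∀ T ⊆ S, T ∈ A) {f : Fin k → Finset α} (hf : ∀ j, f j ∈ A)
    {Y : Finset α} (hYf : Y ⊆ Finset.univ.sup f) :
    Shatters (symmDiffFam k A) Y := by
  intro T hTY
  set prior : Fin k → Finset α :=
    fun j => (Finset.univ.filter fun j' => j' < j).sup f with hprior
  set g : Fin k → Finset α := fun j => (f j ∩ T) \ prior j with hg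
  have hmem_g : ∀ x j, x ∈ g j ↔ (x ∈ f j ∧ x ∈ T) ∧ x ∉ prior j := by
    intro x j
    simp [hg, Finset.mem_sdiff, Finset.mem_inter]
  have hmem_prior : ∀ x j, x ∈ prior j ↔ ∃ j', j' < j ∧ x ∈ f j' := by
    intro x j
    simp [hprior, Finset.mem_sup]
  have hgA : ∀ j, g j ∈ A := by
    intro j
    apply hdc (f j) (hf j)
    intro x hx
    exact ((hmem_g x j).1 hx).1.1
  have huniq : ∀ x j j', x ∈ g j → x ∈ g j' → j = j' := by
    intro x j j' hj hj'
    rcases lt_trichotomy j j' with h | h | h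
    · exact absurd ((hmem_prior x j').2 ⟨j, h, ((hmem_g x j).1 hj).1.1⟩)
        ((hmem_g x j').1 hj').2
    · exact h
    · exact absurd ((hmem_prior x j).2 ⟨j', h, ((hmem_g x j').1 hj').1.1⟩)
        ((hmem_g x j).1 hj).2
  have hex : ∀ x ∈ T, ∃ j, x ∈ g j := by
    intro x hx
    have hxY : x ∈ Finset.univ.sup f := hYf (hTY hx)
    obtain ⟨j₁, _, hj₁⟩ := Finset.mem_sup.1 hxY
    have hne : (Finset.univ.filter fun j' => x ∈ f j').Nonempty := ⟨j₁, by simp [hj₁]⟩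
    set j := (Finset.univ.filter fun j' => x ∈ f j').min' hne with hj
    have hxfj : x ∈ f j := by
      have := Finset.min'_mem _ hne
      rw [← hj] at this
      exact (Finset.mem_filter.1 this).2
    refine ⟨j, (hmem_g x j).2 ⟨⟨hxfj, hx⟩, ?_⟩⟩
    intro hp
    obtain ⟨j', hj'lt, hj'⟩ := (hmem_prior x j).1 hp
    have : j ≤ j' := Finset.min'_le _ j' (by simp [hj'])
    exact absurd hj'lt (not_lt.2 this)
  have hsd : symmDiffAll g = T := by
    ext x
    rw [mem_symmDiffAll]
    constructor
    · intro hodd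
      obtain ⟨j, hj⟩ := (Ncount_pos_iff g x).1 hodd.pos
      exact ((hmem_g x j).1 hj).1.2
    · intro hx
      obtain ⟨j, hj⟩ := hex x hx
      have : (Finset.univ.filter fun j' => x ∈ g j') = {j} := by
        ext j'
        simp only [Finset.mem_filter, Finset.mem_univ, true_and, Finset.mem_singleton]
        constructor
        · exact fun h => (huniq x j' j h hj).symm ▸ rfl
        · rintro rfl; exact hj
      unfold Ncount
      rw [this, Finset.card_singleton]
      exact odd_one
  refine ⟨symmDiffAll g, mem_symmDiffFam.2 ⟨g, hgA, rfl⟩, ?_⟩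
  rw [hsd]
  exact Finset.inter_eq_left.2 hTY

lemma kwise_of_downclosed {k d : ℕ} {A : Finset (Finset α)}
    (hdc : ∀ S ∈ A, ∀ T ⊆ S, T ∈ A) (hvc : vcDim (symmDiffFam k A) ≤ d) :
    KwiseUnion k d A := by
  intro f hf
  by_contra hcon
  push_neg at hcon
  obtain ⟨Y, hYsub, hYcard⟩ := Finset.exists_subset_card_eq (by omega :
    d + 1 ≤ (Finset.univ.sup f).card)
  have hsh : Shatters (symmDiffFam k A) Y := shatters_of_downclosed hdc hf hYsub
  have : d + 1 ≤ vcDim (symmDiffFam k A) :=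
    le_csSup (bddAbove_vcset _) ⟨Y, hsh, hYcard⟩
  omega

lemma vcDim_compress_le {k : ℕ} (i : α) (A : Finset (Finset α)) :
    vcDim (symmDiffFam k (compress i A)) ≤ vcDim (symmDiffFam k A) := by
  apply csSup_le'
  rintro m ⟨Y, hY, rfl⟩
  exact le_csSup (bddAbove_vcset _) ⟨Y, shatters_compress hY, rfl⟩

lemma exists_compressed (k : ℕ) (N : ℕ) :
    ∀ A : Finset (Finset α), msr A ≤ N →
      ∃ B : Finset (Finset α), B.card = A.card ∧ (∀ S ∈ B, ∀ T ⊆ S, T ∈ B) ∧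
        vcDim (symmDiffFam k B) ≤ vcDim (symmDiffFam k A) := by
  induction N with
  | zero =>
    intro A hA
    by_cases hall : ∀ j : α, compress j A = A
    · exact ⟨A, rfl, downclosed_of_erase_closed A (erase_mem_of_all_compressed A hall),
        le_rfl⟩
    · push_neg at hall
      obtain ⟨i, hi⟩ := hall
      have := msr_compress_lt i A hi
      omega
  | succ N ih =>
    intro A hA
    by_cases hall : ∀ j : α, compress j A = A
    · exact ⟨A, rfl, downclosed_of_erase_closed A (erase_mem_of_all_compressed A hall),
        le_rfl⟩
    · push_neg at hall
      obtain ⟨i, hi⟩ := hall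
      have hlt := msr_compress_lt i A hi
      obtain ⟨B, h1, h2, h3⟩ := ih (compress i A) (by omega)
      exact ⟨B, h1.trans (card_compress i A), h2, h3.trans (vcDim_compress_le i A)⟩

end Aux
/-- every `k`-wise `(n−d)`-union family satisfies `VC(△𝒜^k) ≤ d`; in
particular the maximum size of a family with `VC(△𝒜^k) ≤ d` equals `p(n,k,d)`. -/
theorem statement5 (k d n : ℕ) (hk : 0 < k) (hd : 0 < d) (hdn : d < n) :
    (∀ A : Finset (Finset (Fin n)), KwiseUnion k d A → vcDim (symmDiffFam k A) ≤ d) ∧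
      sSup {m | ∃ A : Finset (Finset (Fin n)), vcDim (symmDiffFam k A) ≤ d ∧ A.card = m} =
        pMax n k d := by
  constructor
  · intro A hA
    exact part1 hA
  · apply le_antisymm
    · apply csSup_le'
      rintro m ⟨A, hvc, rfl⟩
      obtain ⟨B, hcard, hdc, hvcB⟩ := exists_compressed k (msr A) A le_rfl
      have hkw : KwiseUnion k d B := kwise_of_downclosed hdc (hvcB.trans hvc)
      rw [← hcard]
      apply le_csSup
      · exact ⟨Fintype.card (Finset (Fin n)), by
          rintro m ⟨F, _, rfl⟩; exact Finset.card_le_univ F⟩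
      · exact ⟨B, hkw, rfl⟩
    · apply csSup_le'
      rintro m ⟨F, hkw, rfl⟩
      apply le_csSup
      · exact ⟨Fintype.card (Finset (Fin n)), by
          rintro m ⟨A, _, rfl⟩; exact Finset.card_le_univ A⟩
      · exact ⟨F, part1 hkw, rfl⟩
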